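/- arXiv:math-ph/9911018 — 5 statements merged into one kernel-verified Lean document; each statement's English description precedes it below -/
import Mathlib

section
/- If α, β, γ : ℝ → ℝ are differentiable and T(t) := T(α(t),β(t),γ(t)), then for every t the matrix Ṫ(t)·T(t)ᵀ equals the skew-symmetric matrix whose (2,1) entry is α̇ + β̇ cos γ, whose (3,1) entry is β̇ cos α sin γ − γ̇ sin α, whose (3,2) entry is β̇ sin α sin γ + γ̇ cos α (all functions evaluated at t), whose (1,2), (1,3), (2,3) entries are the negatives of these, and whose diagonal entries are 0. -/
/-!
`T(α, β, γ) = R_z(α) R_x(γ) R_z(β)` is a product of coordinate rotations, and each factor satisfies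
`d/dt R(θ(t)) = θ̇ K R(θ(t))` for the infinitesimal generator `K` of its axis. By the product rule
and orthogonality of the factors, `Ṫ Tᵀ = α̇ K_z + γ̇ R_z K_x R_zᵀ + β̇ (R_z R_x) K_z (R_z R_x)ᵀ`,
and the two conjugated generators are the skew matrices of the rotated axes `R_z e₁` and
`R_z R_x e₃`.
-/

open Matrix Real

/-- The Euler-angle matrix `T(α,β,γ)`: its first column is
`(cos α cos β − sin α sin β cos γ, sin α cos β + cos α sin β cos γ, sin β sin γ)`,
its second column is
`(−cos α sin β − sin α cos β cos γ, −sin α sin β + cos α cos β cos γ, cos β sin γ)`,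
and its third column is `(sin α sin γ, −cos α sin γ, cos γ)`. -/
noncomputable def eulerT (α β γ : ℝ) : Matrix (Fin 3) (Fin 3) ℝ :=
  !![Real.cos α * Real.cos β - Real.sin α * Real.sin β * Real.cos γ,
     -(Real.cos α * Real.sin β) - Real.sin α * Real.cos β * Real.cos γ,
     Real.sin α * Real.sin γ;
     Real.sin α * Real.cos β + Real.cos α * Real.sin β * Real.cos γ,
     -(Real.sin α * Real.sin β) + Real.cos α * Real.cos β * Real.cos γ,
     -(Real.cos α * Real.sin γ);
     Real.sin β * Real.sin γ,
     Real.cos β * Real.sin γ,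
     Real.cos γ]

section EntrywiseDeriv

variable {𝕜 : Type*} [NontriviallyNormedField 𝕜] {m n p : Type*}

/-- `Matrix` carries no norm instance, so its derivatives are taken entry by entry. -/
def HasEntrywiseDerivAt (A : 𝕜 → Matrix m n 𝕜) (A' : Matrix m n 𝕜) (t : 𝕜) : Prop :=
  ∀ i j, HasDerivAt (fun s => A s i j) (A' i j) t

namespace HasEntrywiseDerivAt

variable {A : 𝕜 → Matrix m n 𝕜} {A' : Matrix m n 𝕜} {t : 𝕜}

theorem matrix_of_deriv (hA : HasEntrywiseDerivAt A A' t) :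
    Matrix.of (fun i j => deriv (fun s => A s i j) t) = A' :=
  Matrix.ext fun i j => (hA i j).deriv

theorem mul [Fintype n] {B : 𝕜 → Matrix n p 𝕜} {B' : Matrix n p 𝕜}
    (hA : HasEntrywiseDerivAt A A' t) (hB : HasEntrywiseDerivAt B B' t) :
    HasEntrywiseDerivAt (fun s => A s * B s) (A' * B t + A t * B') t := by
  intro i j
  rw [Matrix.add_apply, mul_apply, mul_apply, ← Finset.sum_add_distrib]
  exact HasDerivAt.fun_sum fun k _ => (hA i k).fun_mul (hB k j)

theorem comp {f : 𝕜 → 𝕜} {f' : 𝕜} (hA : HasEntrywiseDerivAt A A' (f t))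
    (hf : HasDerivAt f f' t) : HasEntrywiseDerivAt (fun s => A (f s)) (f' • A') t :=
  fun i j => (hA i j).scomp t hf

end HasEntrywiseDerivAt

end EntrywiseDeriv

noncomputable def rotZ (θ : ℝ) : Matrix (Fin 3) (Fin 3) ℝ :=
  !![cos θ, -sin θ, 0; sin θ, cos θ, 0; 0, 0, 1]

noncomputable def rotX (θ : ℝ) : Matrix (Fin 3) (Fin 3) ℝ :=
  !![1, 0, 0; 0, cos θ, -sin θ; 0, sin θ, cos θ]

def skewZ : Matrix (Fin 3) (Fin 3) ℝ := !![0, -1, 0; 1, 0, 0; 0, 0, 0]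

def skewX : Matrix (Fin 3) (Fin 3) ℝ := !![0, 0, 0; 0, 0, -1; 0, 1, 0]

theorem eulerT_eq_rotZ_mul_rotX_mul_rotZ (α β γ : ℝ) :
    eulerT α β γ = rotZ α * rotX γ * rotZ β := by
  ext i j
  fin_cases i <;> fin_cases j <;>
    simp [eulerT, rotZ, rotX, mul_apply, Fin.sum_univ_three] <;> ring

theorem rotZ_mul_transpose (θ : ℝ) : rotZ θ * (rotZ θ)ᵀ = 1 := by
  ext i j
  fin_cases i <;> fin_cases j <;>
    simp [rotZ, mul_apply, Fin.sum_univ_three, one_apply, ← sq] <;> ring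

theorem rotX_mul_transpose (θ : ℝ) : rotX θ * (rotX θ)ᵀ = 1 := by
  ext i j
  fin_cases i <;> fin_cases j <;>
    simp [rotX, mul_apply, Fin.sum_univ_three, one_apply, ← sq] <;> ring

theorem hasEntrywiseDerivAt_rotZ (θ : ℝ) : HasEntrywiseDerivAt rotZ (skewZ * rotZ θ) θ := by
  intro i j
  fin_cases i <;> fin_cases j <;>
    simp [rotZ, skewZ, mul_apply, Fin.sum_univ_three] <;>
    first
    | exact hasDerivAt_const θ _
    | exact hasDerivAt_sin θ
    | exact hasDerivAt_cos θ
    | exact (hasDerivAt_sin θ).neg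

theorem hasEntrywiseDerivAt_rotX (θ : ℝ) : HasEntrywiseDerivAt rotX (skewX * rotX θ) θ := by
  intro i j
  fin_cases i <;> fin_cases j <;>
    simp [rotX, skewX, mul_apply, Fin.sum_univ_three] <;>
    first
    | exact hasDerivAt_const θ _
    | exact hasDerivAt_sin θ
    | exact hasDerivAt_cos θ
    | exact (hasDerivAt_sin θ).neg

theorem Matrix.leibniz_mul_mul_mul_transpose {R n : Type*} [CommRing R] [Fintype n] [DecidableEq n]
    {A B C A' B' C' : Matrix n n R} (hB : B * Bᵀ = 1) (hC : C * Cᵀ = 1) :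
    ((A' * B + A * B') * C + A * B * C') * (A * B * C)ᵀ =
      A' * Aᵀ + A * (B' * Bᵀ) * Aᵀ + A * B * (C' * Cᵀ) * (A * B)ᵀ := by
  have hB' (X : Matrix n n R) : B * (Bᵀ * X) = X := by rw [← Matrix.mul_assoc, hB, one_mul]
  have hC' (X : Matrix n n R) : C * (Cᵀ * X) = X := by rw [← Matrix.mul_assoc, hC, one_mul]
  simp only [transpose_mul, add_mul, Matrix.mul_assoc, hB', hC']

theorem Matrix.smul_mul_mul_transpose_of_mul_transpose_eq_one {R n : Type*} [CommRing R]
    [Fintype n] [DecidableEq n] {Q : Matrix n n R} (hQ : Q * Qᵀ = 1) (c : R) (K : Matrix n n R) :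
    c • (K * Q) * Qᵀ = c • K := by
  rw [Matrix.smul_mul, Matrix.mul_assoc, hQ, mul_one]

theorem rotZ_mul_skewX_mul_transpose (θ : ℝ) :
    rotZ θ * skewX * (rotZ θ)ᵀ = !![0, 0, sin θ; 0, 0, -cos θ; -sin θ, cos θ, 0] := by
  ext i j
  fin_cases i <;> fin_cases j <;>
    simp [rotZ, skewX, mul_apply, Fin.sum_univ_three]

theorem rotZ_mul_rotX_mul_skewZ_mul_transpose (α γ : ℝ) :
    rotZ α * rotX γ * skewZ * (rotZ α * rotX γ)ᵀ =
      !![0, -cos γ, -(cos α * sin γ);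
         cos γ, 0, -(sin α * sin γ);
         cos α * sin γ, sin α * sin γ, 0] := by
  have h := sin_sq_add_cos_sq α
  ext i j
  fin_cases i <;> fin_cases j <;>
    simp [rotZ, rotX, skewZ, mul_apply, Fin.sum_univ_three] <;> grind

/-- If `α, β, γ : ℝ → ℝ` are differentiable and `T(t) = eulerT (α t) (β t) (γ t)`, then the
entrywise derivative `Ṫ(t)` satisfies: `Ṫ(t) * T(t)ᵀ` is the skew-symmetric matrix whose
`(2,1)` entry is `α̇ + β̇ cos γ`, whose `(3,1)` entry is `β̇ cos α sin γ − γ̇ sin α`, and whose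
`(3,2)` entry is `β̇ sin α sin γ + γ̇ cos α` (evaluated at `t`). -/
theorem eulerT_deriv_mul_transpose (α β γ : ℝ → ℝ)
    (hα : Differentiable ℝ α) (hβ : Differentiable ℝ β) (hγ : Differentiable ℝ γ) (t : ℝ) :
    (Matrix.of fun i j => deriv (fun s => eulerT (α s) (β s) (γ s) i j) t) *
        (eulerT (α t) (β t) (γ t))ᵀ =
      !![0,
         -(deriv α t + deriv β t * Real.cos (γ t)),
         -(deriv β t * Real.cos (α t) * Real.sin (γ t) - deriv γ t * Real.sin (α t));
         deriv α t + deriv β t * Real.cos (γ t),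
         0,
         -(deriv β t * Real.sin (α t) * Real.sin (γ t) + deriv γ t * Real.cos (α t));
         deriv β t * Real.cos (α t) * Real.sin (γ t) - deriv γ t * Real.sin (α t),
         deriv β t * Real.sin (α t) * Real.sin (γ t) + deriv γ t * Real.cos (α t),
         0] := by
  have hT := (((hasEntrywiseDerivAt_rotZ _).comp (hα t).hasDerivAt).mul
    ((hasEntrywiseDerivAt_rotX _).comp (hγ t).hasDerivAt)).mul
    ((hasEntrywiseDerivAt_rotZ _).comp (hβ t).hasDerivAt)
  simp only [eulerT_eq_rotZ_mul_rotX_mul_rotZ, hT.matrix_of_deriv,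
    Matrix.leibniz_mul_mul_mul_transpose (rotX_mul_transpose _) (rotZ_mul_transpose _)]
  simp only [Matrix.smul_mul_mul_transpose_of_mul_transpose_eq_one (rotZ_mul_transpose _),
    Matrix.smul_mul_mul_transpose_of_mul_transpose_eq_one (rotX_mul_transpose _),
    Matrix.mul_smul, Matrix.smul_mul, rotZ_mul_skewX_mul_transpose,
    rotZ_mul_rotX_mul_skewZ_mul_transpose]
  ext i j
  fin_cases i <;> fin_cases j <;> simp [skewZ] <;> ring
end

section
/- Let T : ℝ → M₃(ℝ) be differentiable with T(t)·T(t)ᵀ = I for all t, let h₁, h₂, h₃ : ℝ → ℝ be differentiable and nowhere zero, H(t) = diag(h₁(t), h₂(t), h₃(t)), M(t) = Ṫ(t)T(t)⁻¹ + T(t)Ḣ(t)H(t)⁻¹T(t)⁻¹, let w : ℝ → ℝ³ be differentiable, let e ≠ 0 be real, and define the vector potential A(t,x) = (1/(2e))·(M(t)(x − w(t)) + ẇ(t)) ∈ ℝ³. Then for every t and all j, k ∈ {1,2,3}, the function x ↦ ∂A_k/∂x_j (t,x) − ∂A_j/∂x_k (t,x) is constant on ℝ³ with value (1/e)·(Ṫ(t)T(t)ᵀ)_{kj};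 in particular the magnetic field rot A is independent of the spatial variables and of h₁, h₂, h₃, and it vanishes identically if and only if Ṫ(t) = 0 for all t. -/
/-!
Differentiating `T Tᵀ = 1` shows that `Ṫ Tᵀ` is skew-symmetric, while
`T Ḣ H⁻¹ T⁻¹ = T diag(ḣₐ / hₐ) Tᵀ` is symmetric. The potential is affine in `x` with linear part
`M / (2e)`, so its curl is `1/e` times the skew part of `M`, which is `Ṫ Tᵀ`. Since `T` is
invertible, `Ṫ Tᵀ = 0` exactly when `Ṫ = 0`.
-/

open Matrix

/-- Entrywise derivative of a matrix-valued function of a real variable. -/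
noncomputable def matDeriv (T : ℝ → Matrix (Fin 3) (Fin 3) ℝ) (t : ℝ) :
    Matrix (Fin 3) (Fin 3) ℝ :=
  Matrix.of fun i j => deriv (fun s => T s i j) t

theorem Matrix.isSymm_mul_diagonal_mul_transpose {m n α : Type*} [Fintype n] [DecidableEq n]
    [CommSemiring α] (U : Matrix m n α) (d : n → α) : (U * diagonal d * Uᵀ).IsSymm := by
  simp only [IsSymm, transpose_mul, transpose_transpose, (isSymm_diagonal d).eq, Matrix.mul_assoc]

theorem fderiv_smul_mulVec_sub_add_apply_single {𝕜 n : Type*} [NontriviallyNormedField 𝕜]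
    [CompleteSpace 𝕜] [Fintype n] [DecidableEq n] (c : 𝕜) (N : Matrix n n 𝕜) (v u x : n → 𝕜)
    (j k : n) :
    fderiv 𝕜 (fun y => (c • (N *ᵥ (y - v) + u)) k) x (Pi.single j 1) = c * N k j := by
  let L : (n → 𝕜) →L[𝕜] n → 𝕜 := LinearMap.toContinuousLinearMap N.mulVecLin
  have hA : HasFDerivAt (fun y => c • (N *ᵥ (y - v) + u)) (c • L) x :=
    ((L.hasFDerivAt.comp x ((hasFDerivAt_id x).sub_const v)).add_const u).const_smul c
  rw [(hasFDerivAt_pi'.1 hA k).fderiv]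
  simp [L]

theorem matDeriv_const (C : Matrix (Fin 3) (Fin 3) ℝ) (t : ℝ) :
    matDeriv (fun _ => C) t = 0 := by
  ext i j; simp [matDeriv]

theorem matDeriv_transpose (T : ℝ → Matrix (Fin 3) (Fin 3) ℝ) (t : ℝ) :
    matDeriv (fun s => (T s)ᵀ) t = (matDeriv T t)ᵀ := rfl

theorem matDeriv_mul {T S : ℝ → Matrix (Fin 3) (Fin 3) ℝ} {t : ℝ}
    (hT : ∀ i j, DifferentiableAt ℝ (fun s => T s i j) t)
    (hS : ∀ i j, DifferentiableAt ℝ (fun s => S s i j) t) :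
    matDeriv (fun s => T s * S s) t = matDeriv T t * S t + T t * matDeriv S t := by
  ext i j
  have : HasDerivAt (fun s => ∑ l, T s i l * S s l j)
      (∑ l, (deriv (fun s => T s i l) t * S t l j + T t i l * deriv (fun s => S s l j) t)) t :=
    HasDerivAt.fun_sum fun l _ => (hT i l).hasDerivAt.mul (hS l j).hasDerivAt
  simp only [matDeriv, Matrix.add_apply, mul_apply, of_apply, this.deriv, Finset.sum_add_distrib]

theorem matDeriv_diagonal (h : Fin 3 → ℝ → ℝ) (t : ℝ) :
    matDeriv (fun s => diagonal fun a => h a s) t = diagonal fun a => deriv (h a) t := by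
  ext i j
  rcases eq_or_ne i j with rfl | hij
  · simp [matDeriv]
  · simp [matDeriv, hij]

theorem transpose_matDeriv_mul_transpose_eq_neg {T : ℝ → Matrix (Fin 3) (Fin 3) ℝ} {t : ℝ}
    (hT : ∀ i j, DifferentiableAt ℝ (fun s => T s i j) t) (hTorth : ∀ s, T s * (T s)ᵀ = 1) :
    (matDeriv T t * (T t)ᵀ)ᵀ = -(matDeriv T t * (T t)ᵀ) := by
  have h := matDeriv_mul (S := fun s => (T s)ᵀ) hT fun i j => hT j i
  rw [funext hTorth, matDeriv_const, matDeriv_transpose] at h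
  rw [transpose_mul, transpose_transpose, eq_neg_iff_add_eq_zero, add_comm, h]

theorem magnetic_field_of_separable_potential_general
    (T : ℝ → Matrix (Fin 3) (Fin 3) ℝ)
    (hT : ∀ i j, Differentiable ℝ fun t => T t i j)
    (hTorth : ∀ t, T t * (T t)ᵀ = 1)
    (h : Fin 3 → ℝ → ℝ)
    (H : ℝ → Matrix (Fin 3) (Fin 3) ℝ)
    (hH : H = fun t => Matrix.diagonal fun a => h a t)
    (M : ℝ → Matrix (Fin 3) (Fin 3) ℝ)
    (hM : M = fun t =>
      matDeriv T t * (T t)⁻¹ + T t * matDeriv H t * (H t)⁻¹ * (T t)⁻¹)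
    (w : Fin 3 → ℝ → ℝ)
    (e : ℝ) (he : e ≠ 0)
    (A : ℝ → (Fin 3 → ℝ) → Fin 3 → ℝ)
    (hA : A = fun t x =>
      (1 / (2 * e)) • (M t *ᵥ (x - fun a => w a t) + fun a => deriv (w a) t)) :
    (∀ (t : ℝ) (x : Fin 3 → ℝ) (j k : Fin 3),
      fderiv ℝ (fun y => A t y k) x (Pi.single j 1) -
        fderiv ℝ (fun y => A t y j) x (Pi.single k 1) =
      (1 / e) * (matDeriv T t * (T t)ᵀ) k j) ∧
    ((∀ (t : ℝ) (x : Fin 3 → ℝ) (j k : Fin 3),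
      fderiv ℝ (fun y => A t y k) x (Pi.single j 1) -
        fderiv ℝ (fun y => A t y j) x (Pi.single k 1) = 0) ↔
      ∀ t : ℝ, matDeriv T t = 0) := by
  have hTinv (t : ℝ) : (T t)⁻¹ = (T t)ᵀ := inv_eq_right_inv (hTorth t)
  have curl (t : ℝ) (x : Fin 3 → ℝ) (j k : Fin 3) :
      fderiv ℝ (fun y => A t y k) x (Pi.single j 1) -
        fderiv ℝ (fun y => A t y j) x (Pi.single k 1) =
      (1 / e) * (matDeriv T t * (T t)ᵀ) k j := by
    have hskew :=
      congr_fun₂ (transpose_matDeriv_mul_transpose_eq_neg (fun i j => hT i j t) hTorth) j k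
    have hsymm : (T t * matDeriv H t * (H t)⁻¹ * (T t)⁻¹).IsSymm := by
      rw [hH, matDeriv_diagonal, inv_diagonal, Matrix.mul_assoc (T t), diagonal_mul_diagonal,
        hTinv]
      exact isSymm_mul_diagonal_mul_transpose _ _
    subst hA hM
    rw [fderiv_smul_mulVec_sub_add_apply_single, fderiv_smul_mulVec_sub_add_apply_single]
    beta_reduce
    rw [Matrix.add_apply, Matrix.add_apply, hsymm.apply k j, hTinv]
    simp only [transpose_apply, Matrix.neg_apply] at hskew
    field_simp
    linarith
  refine ⟨curl, fun hzero t => ?_, fun hTdot t x j k => by simp [curl, hTdot]⟩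
  have hB : matDeriv T t * (T t)ᵀ = 0 := by
    ext k j
    simpa [curl, he] using hzero t 0 j k
  calc matDeriv T t = matDeriv T t * (T t)ᵀ * T t := by
        rw [Matrix.mul_assoc, mul_eq_one_comm.mp (hTorth t), Matrix.mul_one]
    _ = 0 := by rw [hB, Matrix.zero_mul]

/-- For the vector potential `A(t,x) = (1/(2e))(M(t)(x − w(t)) + ẇ(t))` with
`M(t) = Ṫ(t)T(t)⁻¹ + T(t)Ḣ(t)H(t)⁻¹T(t)⁻¹`, the magnetic field components
`∂A_k/∂x_j − ∂A_j/∂x_k` are constant in `x` with value `(1/e)(Ṫ(t)T(t)ᵀ)_{kj}`;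
in particular the magnetic field vanishes identically iff `Ṫ(t) = 0` for all `t`. -/
theorem magnetic_field_of_separable_potential
    (T : ℝ → Matrix (Fin 3) (Fin 3) ℝ)
    (hT : ∀ i j, Differentiable ℝ fun t => T t i j)
    (hTorth : ∀ t, T t * (T t)ᵀ = 1)
    (h : Fin 3 → ℝ → ℝ)
    (hh : ∀ a, Differentiable ℝ (h a))
    (hne : ∀ a t, h a t ≠ 0)
    (H : ℝ → Matrix (Fin 3) (Fin 3) ℝ)
    (hH : H = fun t => Matrix.diagonal fun a => h a t)
    (M : ℝ → Matrix (Fin 3) (Fin 3) ℝ)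
    (hM : M = fun t =>
      matDeriv T t * (T t)⁻¹ + T t * matDeriv H t * (H t)⁻¹ * (T t)⁻¹)
    (w : Fin 3 → ℝ → ℝ)
    (hw : ∀ a, Differentiable ℝ (w a))
    (e : ℝ) (he : e ≠ 0)
    (A : ℝ → (Fin 3 → ℝ) → Fin 3 → ℝ)
    (hA : A = fun t x =>
      (1 / (2 * e)) • (M t *ᵥ (x - fun a => w a t) + fun a => deriv (w a) t)) :
    (∀ (t : ℝ) (x : Fin 3 → ℝ) (j k : Fin 3),
      fderiv ℝ (fun y => A t y k) x (Pi.single j 1) -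
        fderiv ℝ (fun y => A t y j) x (Pi.single k 1) =
      (1 / e) * (matDeriv T t * (T t)ᵀ) k j) ∧
    ((∀ (t : ℝ) (x : Fin 3 → ℝ) (j k : Fin 3),
      fderiv ℝ (fun y => A t y k) x (Pi.single j 1) -
        fderiv ℝ (fun y => A t y j) x (Pi.single k 1) = 0) ↔
      ∀ t : ℝ, matDeriv T t = 0) :=
  magnetic_field_of_separable_potential_general T hT hTorth h H hH M hM w e he A hA
end

section
/- The function g : ℝ³ → ℝ given by g(x₁,x₂,x₃) = (1/2) ln( √(x₁² + x₂² + x₃²) + x₃ ) (the first coordinate of the inverse of the parabolic coordinate map) is harmonic on the open set { x ∈ ℝ³ : x₁² + x₂² > 0 }, i.e. its Laplacian ∂²g/∂x₁² + ∂²g/∂x₂² + ∂²g/∂x₃² vanishes there. -/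
/-!
Along each coordinate line `gPar` is an explicit one-variable function, so its unmixed second
partials follow from the chain rule. With `ρ = |x|`, the two transverse ones add up to
`x₃ / (2ρ³)`, because `x₁² + x₂² = (ρ - x₃)(ρ + x₃)`, and this cancels the axial one,
`-x₃ / (2ρ³)`.
-/

open Real Filter Topology

/-- The first coordinate of the inverse of the parabolic coordinate map,
`g(x₁,x₂,x₃) = (1/2) ln(√(x₁² + x₂² + x₃²) + x₃)`. -/
noncomputable def gPar (x : Fin 3 → ℝ) : ℝ :=
  (1 / 2) * Real.log (Real.sqrt ((x 0) ^ 2 + (x 1) ^ 2 + (x 2) ^ 2) + x 2)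

lemma sqrt_add_pos_of_sq_lt {c q : ℝ} (h : c ^ 2 < q) : 0 < √q + c := by
  have : |c| < √q := (Real.lt_sqrt (abs_nonneg c)).2 (by rwa [sq_abs])
  linarith [neg_abs_le c]

lemma deriv_deriv_eq_of_eventually_hasDerivAt {f f' : ℝ → ℝ} {a f'' : ℝ}
    (hf : ∀ᶠ s in 𝓝 a, HasDerivAt f (f' s) s) (hf' : HasDerivAt f' f'' a) :
    deriv (deriv f) a = f'' := by
  rw [EventuallyEq.deriv_eq (hf.mono fun _ hs => hs.deriv)]
  exact hf'.deriv

section LineRestrictions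

variable {k c r : ℝ}

lemma hasDerivAt_sqrt_sq_add (h : 0 < r ^ 2 + k) :
    HasDerivAt (fun r => √(r ^ 2 + k)) (r / √(r ^ 2 + k)) r := by
  refine (((hasDerivAt_pow 2 r).add_const k).sqrt h.ne').congr_deriv ?_
  field_simp
  norm_num

lemma hasDerivAt_half_log_sqrt_sq_add_add (h : c ^ 2 < r ^ 2 + k) :
    HasDerivAt (fun r => 1 / 2 * log (√(r ^ 2 + k) + c))
      (r / (2 * √(r ^ 2 + k) * (√(r ^ 2 + k) + c))) r := by
  have hρ : 0 < √(r ^ 2 + k) := Real.sqrt_pos.2 (by nlinarith)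
  have hρc := sqrt_add_pos_of_sq_lt h
  refine ((((hasDerivAt_sqrt_sq_add (by nlinarith)).add_const c).log
    hρc.ne').const_mul (1 / 2)).congr_deriv ?_
  field_simp

lemma hasDerivAt_div_sqrt_sq_add_mul (h : c ^ 2 < r ^ 2 + k) :
    HasDerivAt (fun r => r / (2 * √(r ^ 2 + k) * (√(r ^ 2 + k) + c)))
      ((√(r ^ 2 + k) ^ 2 * (√(r ^ 2 + k) + c) - r ^ 2 * (2 * √(r ^ 2 + k) + c)) /
        (2 * √(r ^ 2 + k) ^ 3 * (√(r ^ 2 + k) + c) ^ 2)) r := by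
  have hρ : 0 < √(r ^ 2 + k) := Real.sqrt_pos.2 (by nlinarith)
  have hρc := sqrt_add_pos_of_sq_lt h
  have hρ' := hasDerivAt_sqrt_sq_add (k := k) (r := r) (by nlinarith)
  refine ((hasDerivAt_id' r).div ((hρ'.const_mul 2).fun_mul (hρ'.add_const c))
    (by positivity)).congr_deriv ?_
  field_simp
  ring

lemma hasDerivAt_half_log_sqrt_sq_add_self (hk : 0 < k) :
    HasDerivAt (fun r => 1 / 2 * log (√(r ^ 2 + k) + r)) (1 / (2 * √(r ^ 2 + k))) r := by
  have hρ : 0 < √(r ^ 2 + k) := Real.sqrt_pos.2 (by positivity)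
  have hρr := sqrt_add_pos_of_sq_lt (c := r) (q := r ^ 2 + k) (by linarith)
  refine ((((hasDerivAt_sqrt_sq_add (by positivity)).fun_add (hasDerivAt_id' r)).log
    hρr.ne').const_mul (1 / 2)).congr_deriv ?_
  field_simp
  ring

lemma hasDerivAt_one_div_two_mul_sqrt_sq_add (hk : 0 < k) :
    HasDerivAt (fun r => 1 / (2 * √(r ^ 2 + k))) (-r / (2 * √(r ^ 2 + k) ^ 3)) r := by
  have hρ : 0 < √(r ^ 2 + k) := Real.sqrt_pos.2 (by positivity)
  refine ((hasDerivAt_const r (1 : ℝ)).div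
    ((hasDerivAt_sqrt_sq_add (by positivity)).const_mul 2) (by positivity)).congr_deriv ?_
  field_simp
  ring

lemma deriv_deriv_half_log_sqrt_sq_add_add (h : c ^ 2 < r ^ 2 + k) :
    deriv (deriv fun r => 1 / 2 * log (√(r ^ 2 + k) + c)) r =
      (√(r ^ 2 + k) ^ 2 * (√(r ^ 2 + k) + c) - r ^ 2 * (2 * √(r ^ 2 + k) + c)) /
        (2 * √(r ^ 2 + k) ^ 3 * (√(r ^ 2 + k) + c) ^ 2) := by
  have hnear : ∀ᶠ s in 𝓝 r, c ^ 2 < s ^ 2 + k :=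
    (continuous_const.tendsto r).eventually_lt
      ((by fun_prop : Continuous fun s : ℝ => s ^ 2 + k).tendsto r) h
  exact deriv_deriv_eq_of_eventually_hasDerivAt
    (hnear.mono fun _ hs => hasDerivAt_half_log_sqrt_sq_add_add hs)
    (hasDerivAt_div_sqrt_sq_add_mul h)

lemma deriv_deriv_half_log_sqrt_sq_add_self (hk : 0 < k) :
    deriv (deriv fun r => 1 / 2 * log (√(r ^ 2 + k) + r)) r = -r / (2 * √(r ^ 2 + k) ^ 3) :=
  deriv_deriv_eq_of_eventually_hasDerivAt
    (Eventually.of_forall fun _ => hasDerivAt_half_log_sqrt_sq_add_self hk)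
    (hasDerivAt_one_div_two_mul_sqrt_sq_add hk)

end LineRestrictions

lemma gPar_comp_update_zero (x : Fin 3 → ℝ) :
    (fun r => gPar (Function.update x 0 r)) =
      fun r => 1 / 2 * log (√(r ^ 2 + (x 1 ^ 2 + x 2 ^ 2)) + x 2) := by
  ext r; simp [gPar, add_assoc]

lemma gPar_comp_update_one (x : Fin 3 → ℝ) :
    (fun r => gPar (Function.update x 1 r)) =
      fun r => 1 / 2 * log (√(r ^ 2 + (x 0 ^ 2 + x 2 ^ 2)) + x 2) := by
  ext r; simp [gPar, add_assoc, add_left_comm]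

lemma gPar_comp_update_two (x : Fin 3 → ℝ) :
    (fun r => gPar (Function.update x 2 r)) =
      fun r => 1 / 2 * log (√(r ^ 2 + (x 0 ^ 2 + x 1 ^ 2)) + r) := by
  ext r; simp [gPar, add_comm]

lemma transverse_second_derivs_add {a b c ρ : ℝ} (hρ : 0 < ρ) (hρc : 0 < ρ + c)
    (hρsq : ρ ^ 2 = a ^ 2 + (b ^ 2 + c ^ 2)) :
    (ρ ^ 2 * (ρ + c) - a ^ 2 * (2 * ρ + c)) / (2 * ρ ^ 3 * (ρ + c) ^ 2) +
      (ρ ^ 2 * (ρ + c) - b ^ 2 * (2 * ρ + c)) / (2 * ρ ^ 3 * (ρ + c) ^ 2) = c / (2 * ρ ^ 3) := by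
  field_simp
  linear_combination (2 * ρ + c) * hρsq

lemma contDiffAt_gPar {n : WithTop ℕ∞} {x : Fin 3 → ℝ} (hx : 0 < x 0 ^ 2 + x 1 ^ 2) :
    ContDiffAt ℝ n gPar x := by
  have hq : x 0 ^ 2 + x 1 ^ 2 + x 2 ^ 2 ≠ 0 := by positivity
  have hlog : √(x 0 ^ 2 + x 1 ^ 2 + x 2 ^ 2) + x 2 ≠ 0 :=
    (sqrt_add_pos_of_sq_lt (by linarith)).ne'
  unfold gPar
  fun_prop (disch := assumption)

/-- `gPar` is harmonic on the open set `{x : x₁² + x₂² > 0}`: it is twice differentiable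
there and the sum of its three unmixed second partial derivatives vanishes there. -/
theorem gPar_harmonic :
    ContDiffOn ℝ 2 gPar {x : Fin 3 → ℝ | (x 0) ^ 2 + (x 1) ^ 2 > 0} ∧
    ∀ x : Fin 3 → ℝ, (x 0) ^ 2 + (x 1) ^ 2 > 0 →
      ∑ j : Fin 3,
        deriv (fun s => deriv (fun r => gPar (Function.update x j r)) s) (x j) = 0 := by
  refine ⟨fun x hx => (contDiffAt_gPar hx).contDiffWithinAt, fun x hx => ?_⟩
  rw [Fin.sum_univ_three, gPar_comp_update_zero, gPar_comp_update_one, gPar_comp_update_two,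
    deriv_deriv_half_log_sqrt_sq_add_add (by linarith),
    deriv_deriv_half_log_sqrt_sq_add_add (by linarith),
    deriv_deriv_half_log_sqrt_sq_add_self hx,
    show x 1 ^ 2 + (x 0 ^ 2 + x 2 ^ 2) = x 0 ^ 2 + (x 1 ^ 2 + x 2 ^ 2) by ring,
    show x 2 ^ 2 + (x 0 ^ 2 + x 1 ^ 2) = x 0 ^ 2 + (x 1 ^ 2 + x 2 ^ 2) by ring]
  have hρ : 0 < √(x 0 ^ 2 + (x 1 ^ 2 + x 2 ^ 2)) :=
    Real.sqrt_pos.2 (by linarith [sq_nonneg (x 2)])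
  have hρc : 0 < √(x 0 ^ 2 + (x 1 ^ 2 + x 2 ^ 2)) + x 2 := sqrt_add_pos_of_sq_lt (by linarith)
  have hρsq := Real.sq_sqrt (by positivity : 0 ≤ x 0 ^ 2 + (x 1 ^ 2 + x 2 ^ 2))
  generalize √(x 0 ^ 2 + (x 1 ^ 2 + x 2 ^ 2)) = ρ at hρ hρc hρsq ⊢
  rw [transverse_second_derivs_add hρ hρc hρsq]
  ring
end

section
/- Let h₁, h₂, h₃ : ℝ → ℝ be twice differentiable and nowhere zero, let F₁, F₂, F₃ : ℝ → ℝ and T̃₀ : ℝ → ℝ be functions, and let λ = (λ₁,λ₂,λ₃) ∈ ℝ³. Define the potential V(t,x) = Σ_{a=1}^{3} F_a(x_a/h_a(t))·h_a(t)⁻² + T̃₀(t) − (1/4) Σ_{a=1}^{3} (ḧ_a(t)/h_a(t))·x_a². Suppose φ₀ : ℝ → ℂ is differentiable and satisfies i·φ₀′(t) = ( T̃₀(t) − (i/2) Σ_{a=1}^{3} ḣ_a(t)/h_a(t) − Σ_{a=1}^{3} λ_a h_a(t)⁻² )·φ₀(t) for all t, and φ₁, φ₂, φ₃ : ℝ →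 ℂ are twice differentiable and satisfy φ_a″(ω) = ( F_a(ω) + λ_a )·φ_a(ω) for all ω ∈ ℝ and a = 1,2,3. Then the separated function ψ(t,x) = exp( (i/4) Σ_{a=1}^{3} (ḣ_a(t)/h_a(t))·x_a² ) · φ₀(t) · φ₁(x₁/h₁(t)) · φ₂(x₂/h₂(t)) · φ₃(x₃/h₃(t)) satisfies the Schrödinger equation i·∂ψ/∂t (t,x) + Δψ(t,x) − V(t,x)·ψ(t,x) = 0 for all (t,x) ∈ ℝ × ℝ³, where Δψ = Σ_{a=1}^{3} ∂²ψ/∂x_a². -/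
/-!
Write `ψ = φ₀(t) ∏ₐ uₐ(t, xₐ)` with `uₐ(t, r) = exp (i ḣₐ r² / 4hₐ) φₐ(r / hₐ)`. In `i ∂ₜuₐ` the
rescaling `r / hₐ(t)` produces the term `-i (r ḣₐ / hₐ²) φₐ'`, and the chirp factor is chosen so
that the cross term `i (r ḣₐ / hₐ²) φₐ'` of `∂ᵣ²uₐ` cancels it exactly. What remains is
`i ∂ₜuₐ + ∂ᵣ²uₐ = (Vₐ + i ḣₐ / 2hₐ + λₐ / hₐ²) uₐ` with `Vₐ` the `a`-th part of the potential.
By the product rule these one-dimensional identities add up, and the equation for `φ₀` absorbs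
the leftover `i ḣₐ / 2hₐ + λₐ / hₐ²`.
-/

open scoped BigOperators

open Complex Finset

/-- With `c = ḣ(t)/h(t)` and `k = h(t)` this is the factor `exp (i ḣ r² / 4h) φ (r / h)` of `ψ`
in one Cartesian direction. -/
noncomputable def chirpedMode (c k : ℝ) (φ : ℝ → ℂ) (r : ℝ) : ℂ :=
  cexp (I / 4 * (c * r ^ 2)) * φ (r / k)

section chirpedMode

variable {φ : ℝ → ℂ} {r : ℝ}

theorem chirpedMode_eq_mul_of_eq_mul {c k : ℝ} {φ' : ℝ → ℂ} {q : ℂ}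
    (hφ : φ' (r / k) = q * φ (r / k)) :
    chirpedMode c k φ' r = q * chirpedMode c k φ r := by
  rw [chirpedMode, chirpedMode, hφ]; ring

theorem hasDerivAt_chirpedMode (c k : ℝ) (hφ : DifferentiableAt ℝ φ (r / k)) :
    HasDerivAt (chirpedMode c k φ)
      (I * c * r / 2 * chirpedMode c k φ r + chirpedMode c k (deriv φ) r / k) r := by
  have hphase : HasDerivAt (fun r : ℝ => I / 4 * (c * (r : ℂ) ^ 2)) (I * c * r / 2) r := by
    refine (((hasDerivAt_pow 2 (r : ℂ)).const_mul (c : ℂ)).const_mul (I / 4)).comp_ofReal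
      |>.congr_deriv ?_
    push_cast; ring
  have hscale : HasDerivAt (fun r : ℝ => φ (r / k)) ((k : ℂ)⁻¹ * deriv φ (r / k)) r :=
    (hφ.hasDerivAt.scomp r ((hasDerivAt_id r).div_const k)).congr_deriv (by simp [real_smul])
  exact (hphase.cexp.fun_mul hscale).congr_deriv (by simp only [chirpedMode]; ring)

theorem deriv_deriv_chirpedMode (c k : ℝ) (hφ : Differentiable ℝ φ)
    (hφ' : DifferentiableAt ℝ (deriv φ) (r / k)) :
    deriv (deriv (chirpedMode c k φ)) r =
      (I * c / 2 - c ^ 2 * r ^ 2 / 4) * chirpedMode c k φ r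
        + I * c * r / k * chirpedMode c k (deriv φ) r
        + chirpedMode c k (deriv (deriv φ)) r / k ^ 2 := by
  have hfirst : deriv (chirpedMode c k φ) = fun r =>
      I * c * r / 2 * chirpedMode c k φ r + chirpedMode c k (deriv φ) r / k :=
    funext fun r => (hasDerivAt_chirpedMode c k (hφ _)).deriv
  have hlin : HasDerivAt (fun r : ℝ => I * c * r / 2) (I * c / 2) r := by
    simpa using (((hasDerivAt_id r).ofReal_comp).const_mul (I * c)).div_const 2
  rw [hfirst]
  refine ((hlin.mul (hasDerivAt_chirpedMode c k (hφ _))).add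
    ((hasDerivAt_chirpedMode c k hφ').div_const (k : ℂ))).deriv.trans ?_
  linear_combination (c ^ 2 * r ^ 2 / 4 * chirpedMode c k φ r) * I_sq

theorem hasDerivAt_chirpedMode_param {c k : ℝ → ℝ} {c' k' t : ℝ} (hc : HasDerivAt c c' t)
    (hk : HasDerivAt k k' t) (hkt : k t ≠ 0) (hφ : DifferentiableAt ℝ φ (r / k t)) :
    HasDerivAt (fun s => chirpedMode (c s) (k s) φ r)
      (I / 4 * c' * r ^ 2 * chirpedMode (c t) (k t) φ r
        - r * k' / k t ^ 2 * chirpedMode (c t) (k t) (deriv φ) r) t := by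
  have hphase : HasDerivAt (fun s => I / 4 * ((c s : ℂ) * r ^ 2)) (I / 4 * (c' * r ^ 2)) t :=
    (hc.ofReal_comp.mul_const ((r : ℂ) ^ 2)).const_mul (I / 4)
  have hscale : HasDerivAt (fun s => φ (r / k s))
      ((-(r * k') / k t ^ 2 : ℝ) • deriv φ (r / k t)) t := by
    refine (hφ.hasDerivAt.scomp t ((hasDerivAt_const t r).div hk hkt)).congr_deriv ?_
    rw [zero_mul, zero_sub, neg_div]
  exact (hphase.cexp.fun_mul hscale).congr_deriv
    (by simp only [chirpedMode, real_smul]; push_cast; ring)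

end chirpedMode

theorem chirpedMode_schrodinger {h : ℝ → ℝ} {φ : ℝ → ℂ} {t r : ℝ} {q : ℂ}
    (hh : DifferentiableAt ℝ h t) (hh' : DifferentiableAt ℝ (deriv h) t) (ht : h t ≠ 0)
    (hφ : Differentiable ℝ φ) (hφ' : DifferentiableAt ℝ (deriv φ) (r / h t))
    (hφ'' : deriv (deriv φ) (r / h t) = q * φ (r / h t)) :
    I * deriv (fun s => chirpedMode (deriv h s / h s) (h s) φ r) t
        + deriv (deriv (chirpedMode (deriv h t / h t) (h t) φ)) r
      = (q / h t ^ 2 - deriv (deriv h) t / h t * r ^ 2 / 4 + I / 2 * (deriv h t / h t))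
        * chirpedMode (deriv h t / h t) (h t) φ r := by
  have hc : HasDerivAt (fun s => deriv h s / h s)
      ((deriv (deriv h) t * h t - deriv h t * deriv h t) / h t ^ 2) t :=
    hh'.hasDerivAt.div hh.hasDerivAt ht
  rw [(hasDerivAt_chirpedMode_param hc hh.hasDerivAt ht (hφ _)).deriv,
    deriv_deriv_chirpedMode _ _ hφ hφ', chirpedMode_eq_mul_of_eq_mul hφ'']
  have ht' : (h t : ℂ) ≠ 0 := ofReal_ne_zero.mpr ht
  push_cast
  field_simp
  linear_combination (2 * r ^ 2 * (((deriv (deriv h) t : ℝ) : ℂ) * h t - ((deriv h t : ℝ) : ℂ) ^ 2)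
    * chirpedMode (deriv h t / h t) (h t) φ r) * I_sq

theorem separated_product_schrodinger {ι : Type*} [Fintype ι] [DecidableEq ι]
    (u : ι → ℝ → ℝ → ℂ) (φ₀ : ℝ → ℂ) (μ : ι → ℂ) (ν : ℂ) (t : ℝ) (x : ι → ℝ)
    (hu : ∀ a, DifferentiableAt ℝ (fun s => u a s (x a)) t) (hφ₀ : DifferentiableAt ℝ φ₀ t)
    (hu_eq : ∀ a, I * deriv (fun s => u a s (x a)) t + deriv (deriv (u a t)) (x a)
      = μ a * u a t (x a))
    (hφ₀_eq : I * deriv φ₀ t = ν * φ₀ t) :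
    I * deriv (fun s => φ₀ s * ∏ a, u a s (x a)) t
        + ∑ a, deriv (fun s => deriv (fun r => φ₀ t * ∏ b, u b t (Function.update x a r b)) s)
          (x a)
      = (ν + ∑ a, μ a) * (φ₀ t * ∏ a, u a t (x a)) := by
  set P := ∏ a, u a t (x a)
  set R := fun a => ∏ b ∈ univ.erase a, u b t (x b)
  have hRP : ∀ a, R a * u a t (x a) = P := fun a => prod_erase_mul univ _ (mem_univ a)
  have hslice : ∀ a, (fun r => φ₀ t * ∏ b, u b t (Function.update x a r b))
      = fun r => (φ₀ t * R a) * u a t r := by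
    intro a
    funext r
    rw [← prod_erase_mul univ _ (mem_univ a), Function.update_self, mul_assoc]
    congr 2
    refine prod_congr rfl fun b hb => ?_
    rw [Function.update_of_ne (ne_of_mem_erase hb)]
  have htime : HasDerivAt (fun s => φ₀ s * ∏ a, u a s (x a))
      (deriv φ₀ t * P + φ₀ t * ∑ a, R a * deriv (fun s => u a s (x a)) t) t :=
    hφ₀.hasDerivAt.mul (HasDerivAt.fun_finsetProd fun a _ => (hu a).hasDerivAt)
  have hmode : ∀ a, R a * (I * deriv (fun s => u a s (x a)) t + deriv (deriv (u a t)) (x a))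
      = μ a * P := fun a => by rw [hu_eq, ← hRP]; ring
  simp only [hslice, deriv_const_mul_field', htime.deriv]
  calc _ = I * deriv φ₀ t * P + φ₀ t * ∑ a,
        R a * (I * deriv (fun s => u a s (x a)) t + deriv (deriv (u a t)) (x a)) := by
          simp only [mul_add, sum_add_distrib, mul_sum]; ring_nf
    _ = _ := by simp only [hmode, ← sum_mul, hφ₀_eq]; ring

/-- Separation of variables in the Schrödinger equation with vanishing magnetic field in
the time-rescaled Cartesian coordinates `ω_a = x_a / h_a(t)`: if the factors `φ₀, φ₁, φ₂, φ₃`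
satisfy the separation ODEs, then the separated function `ψ` satisfies
`i ∂ψ/∂t + Δψ − V ψ = 0`. -/
theorem schrodinger_separation_cartesian
    (h : Fin 3 → ℝ → ℝ)
    (hhd : ∀ a, Differentiable ℝ (h a))
    (hhd2 : ∀ a, Differentiable ℝ (deriv (h a)))
    (hhne : ∀ a t, h a t ≠ 0)
    (F : Fin 3 → ℝ → ℝ) (T₀ : ℝ → ℝ) (lam : Fin 3 → ℝ)
    (V : ℝ → (Fin 3 → ℝ) → ℝ)
    (hV : V = fun t x =>
      ∑ a : Fin 3, F a (x a / h a t) / (h a t) ^ 2 + T₀ t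
        - (1 / 4) * ∑ a : Fin 3, (deriv (deriv (h a)) t / h a t) * (x a) ^ 2)
    (φ₀ : ℝ → ℂ) (hφ₀d : Differentiable ℝ φ₀)
    (hφ₀ : ∀ t : ℝ, Complex.I * deriv φ₀ t =
      (((T₀ t : ℝ) : ℂ)
        - Complex.I / 2 * ((∑ a : Fin 3, deriv (h a) t / h a t : ℝ) : ℂ)
        - ((∑ a : Fin 3, lam a / (h a t) ^ 2 : ℝ) : ℂ)) * φ₀ t)
    (φ : Fin 3 → ℝ → ℂ)
    (hφd : ∀ a, Differentiable ℝ (φ a))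
    (hφd2 : ∀ a, Differentiable ℝ (deriv (φ a)))
    (hφ : ∀ (a : Fin 3) (ω : ℝ), deriv (deriv (φ a)) ω =
      (((F a ω : ℝ) : ℂ) + ((lam a : ℝ) : ℂ)) * φ a ω)
    (ψ : ℝ → (Fin 3 → ℝ) → ℂ)
    (hψ : ψ = fun t x =>
      Complex.exp (Complex.I / 4 *
          ((∑ a : Fin 3, (deriv (h a) t / h a t) * (x a) ^ 2 : ℝ) : ℂ))
        * φ₀ t * ∏ a : Fin 3, φ a (x a / h a t)) :
    ∀ (t : ℝ) (x : Fin 3 → ℝ),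
      Complex.I * deriv (fun s => ψ s x) t
        + ∑ a : Fin 3,
            deriv (fun s => deriv (fun r => ψ t (Function.update x a r)) s) (x a)
        - ((V t x : ℝ) : ℂ) * ψ t x = 0 := by
  intro t x
  have hψ_prod : ψ = fun t x =>
      φ₀ t * ∏ a, chirpedMode (deriv (h a) t / h a t) (h a t) (φ a) (x a) := by
    rw [hψ]
    funext t x
    simp only [chirpedMode, prod_mul_distrib, ofReal_sum, mul_sum, exp_sum]
    push_cast
    ring
  subst hψ_prod hV
  beta_reduce
  have hmode_diff : ∀ a, DifferentiableAt ℝ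
      (fun s => chirpedMode (deriv (h a) s / h a s) (h a s) (φ a) (x a)) t := fun a =>
    (hasDerivAt_chirpedMode_param ((hhd2 a t).hasDerivAt.div (hhd a t).hasDerivAt (hhne a t))
      (hhd a t).hasDerivAt (hhne a t) (hφd a _)).differentiableAt
  rw [separated_product_schrodinger
    (fun a s r => chirpedMode (deriv (h a) s / h a s) (h a s) (φ a) r) φ₀
    (fun a => (F a (x a / h a t) + lam a) / h a t ^ 2
      - deriv (deriv (h a)) t / h a t * x a ^ 2 / 4 + I / 2 * (deriv (h a) t / h a t))
    (T₀ t - I / 2 * ∑ a, deriv (h a) t / h a t - ∑ a, lam a / h a t ^ 2) t x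
    hmode_diff (hφ₀d t)
    (fun a => chirpedMode_schrodinger (hhd a t) (hhd2 a t) (hhne a t) (hφd a) (hφd2 a _) (hφ a _))
    (hφ₀ t)]
  simp only [Fin.sum_univ_three]
  push_cast
  ring
end

section
/- Let h₁, h₂, h₃ : ℝ → ℝ be twice differentiable and nowhere zero, let F₁, F₂, F₃ : ℝ → ℝ and T̃₀ : ℝ → ℝ be functions, and let λ = (λ₁,λ₂,λ₃) ∈ ℝ³. Define the potential V(t,x) = Σ_{a=1}^{3} F_a(x_a/h_a(t))·h_a(t)⁻² + T̃₀(t) − (1/4) Σ_{a=1}^{3} (ḧ_a(t)/h_a(t))·x_a². Suppose φ₀ : ℝ → ℝ is differentiable and satisfies φ₀′(t) = −T̃₀(t) − Σ_{a=1}^{3} λ_a h_a(t)⁻² for all t, and φ₁, φ₂, φ₃ : ℝ → ℝ are differentiable and satisfy (φ_a′(ω))² = λ_a − F_a(ω) for all ω ∈ ℝ and a = 1,2,3. Then the separated function u(t,x) = (1/4) Σ_{a=1}^{3} (ḣ_a(t)/h_a(t))·x_a² + φ₀(t) + Σ_{a=1}^{3} φ_a(x_a/h_a(t)) satisfies the Hamilton–Jacobi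 equation ∂u/∂t (t,x) + V(t,x) + Σ_{a=1}^{3} (∂u/∂x_a (t,x))² = 0 for all (t,x) ∈ ℝ × ℝ³. -/
open scoped BigOperators

set_option maxHeartbeats 2000000 in
/-- Separation of variables in the Hamilton–Jacobi equation with vanishing vector
potential in the time-rescaled Cartesian coordinates `ω_a = x_a / h_a(t)`: if the factors
`φ₀, φ₁, φ₂, φ₃` satisfy the separation ODEs, then the separated function `u` satisfies
`∂u/∂t + V + Σ_a (∂u/∂x_a)² = 0`. -/
theorem hamilton_jacobi_separation_cartesian
    (h : Fin 3 → ℝ → ℝ)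
    (hhd : ∀ a, Differentiable ℝ (h a))
    (hhd2 : ∀ a, Differentiable ℝ (deriv (h a)))
    (hhne : ∀ a t, h a t ≠ 0)
    (F : Fin 3 → ℝ → ℝ) (T₀ : ℝ → ℝ) (lam : Fin 3 → ℝ)
    (V : ℝ → (Fin 3 → ℝ) → ℝ)
    (hV : V = fun t x =>
      ∑ a : Fin 3, F a (x a / h a t) / (h a t) ^ 2 + T₀ t
        - (1 / 4) * ∑ a : Fin 3, (deriv (deriv (h a)) t / h a t) * (x a) ^ 2)
    (φ₀ : ℝ → ℝ) (hφ₀d : Differentiable ℝ φ₀)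
    (hφ₀ : ∀ t : ℝ, deriv φ₀ t = -T₀ t - ∑ a : Fin 3, lam a / (h a t) ^ 2)
    (φ : Fin 3 → ℝ → ℝ)
    (hφd : ∀ a, Differentiable ℝ (φ a))
    (hφ : ∀ (a : Fin 3) (ω : ℝ), (deriv (φ a) ω) ^ 2 = lam a - F a ω)
    (u : ℝ → (Fin 3 → ℝ) → ℝ)
    (hu : u = fun t x =>
      (1 / 4) * ∑ a : Fin 3, (deriv (h a) t / h a t) * (x a) ^ 2
        + φ₀ t + ∑ a : Fin 3, φ a (x a / h a t)) :
    ∀ (t : ℝ) (x : Fin 3 → ℝ),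
      deriv (fun s => u s x) t + V t x
        + ∑ a : Fin 3, (deriv (fun r => u t (Function.update x a r)) (x a)) ^ 2 = 0 := by
  subst hV hu
  intro t x
  simp only [Fin.sum_univ_three, Function.update_self,
    Function.update_of_ne (show (1:Fin 3) ≠ 0 by decide),
    Function.update_of_ne (show (2:Fin 3) ≠ 0 by decide),
    Function.update_of_ne (show (0:Fin 3) ≠ 1 by decide),
    Function.update_of_ne (show (2:Fin 3) ≠ 1 by decide),
    Function.update_of_ne (show (0:Fin 3) ≠ 2 by decide),
    Function.update_of_ne (show (1:Fin 3) ≠ 2 by decide)]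
  -- abbreviations
  have q : ∀ a : Fin 3, HasDerivAt (fun s => deriv (h a) s / h a s)
      ((deriv (deriv (h a)) t * h a t - deriv (h a) t * deriv (h a) t) / h a t ^ 2) t :=
    fun a => ((hhd2 a t).hasDerivAt).div ((hhd a t).hasDerivAt) (hhne a t)
  have p : ∀ a : Fin 3, HasDerivAt (fun s => φ a (x a / h a s))
      (deriv (φ a) (x a / h a t) * ((0 * h a t - x a * deriv (h a) t) / h a t ^ 2)) t :=
    fun a => ((hφd a (x a / h a t)).hasDerivAt).comp t
      ((hasDerivAt_const t (x a)).div ((hhd a t).hasDerivAt) (hhne a t))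
  have Ht : HasDerivAt (fun s =>
      1 / 4 *
            (deriv (h 0) s / h 0 s * x 0 ^ 2 + deriv (h 1) s / h 1 s * x 1 ^ 2 +
              deriv (h 2) s / h 2 s * x 2 ^ 2) +
          φ₀ s +
        (φ 0 (x 0 / h 0 s) + φ 1 (x 1 / h 1 s) + φ 2 (x 2 / h 2 s)))
      (1 / 4 *
            ((deriv (deriv (h 0)) t * h 0 t - deriv (h 0) t * deriv (h 0) t) / h 0 t ^ 2 * x 0 ^ 2 +
             (deriv (deriv (h 1)) t * h 1 t - deriv (h 1) t * deriv (h 1) t) / h 1 t ^ 2 * x 1 ^ 2 +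
             (deriv (deriv (h 2)) t * h 2 t - deriv (h 2) t * deriv (h 2) t) / h 2 t ^ 2 * x 2 ^ 2) +
          deriv φ₀ t +
        (deriv (φ 0) (x 0 / h 0 t) * ((0 * h 0 t - x 0 * deriv (h 0) t) / h 0 t ^ 2) +
         deriv (φ 1) (x 1 / h 1 t) * ((0 * h 1 t - x 1 * deriv (h 1) t) / h 1 t ^ 2) +
         deriv (φ 2) (x 2 / h 2 t) * ((0 * h 2 t - x 2 * deriv (h 2) t) / h 2 t ^ 2))) t := by
    exact (((((((q 0).mul_const _).add ((q 1).mul_const _)).add ((q 2).mul_const _)).const_mul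
      (1/4)).add (hφ₀d t).hasDerivAt).add (((p 0).add (p 1)).add (p 2)))
  have pin : ∀ a : Fin 3, HasDerivAt (fun r => φ a (r / h a t))
      (deriv (φ a) (x a / h a t) * (1 / h a t)) (x a) :=
    fun a => ((hφd a (x a / h a t)).hasDerivAt).comp (x a) ((hasDerivAt_id (x a)).div_const (h a t))
  have Hx0 : HasDerivAt (fun r =>
      1 / 4 *
            (deriv (h 0) t / h 0 t * r ^ 2 + deriv (h 1) t / h 1 t * x 1 ^ 2 +
              deriv (h 2) t / h 2 t * x 2 ^ 2) +
          φ₀ t +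
        (φ 0 (r / h 0 t) + φ 1 (x 1 / h 1 t) + φ 2 (x 2 / h 2 t)))
      (1 / 4 * (deriv (h 0) t / h 0 t * (2 * x 0)) +
        deriv (φ 0) (x 0 / h 0 t) * (1 / h 0 t)) (x 0) := by
    exact ((((((hasDerivAt_pow 2 (x 0)).const_mul _).add_const _).add_const _).const_mul
      (1/4)).add_const _).add (((pin 0).add_const _).add_const _) |>.congr_deriv (by push_cast; ring)
  have Hx1 : HasDerivAt (fun r =>
      1 / 4 *
            (deriv (h 0) t / h 0 t * x 0 ^ 2 + deriv (h 1) t / h 1 t * r ^ 2 +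
              deriv (h 2) t / h 2 t * x 2 ^ 2) +
          φ₀ t +
        (φ 0 (x 0 / h 0 t) + φ 1 (r / h 1 t) + φ 2 (x 2 / h 2 t)))
      (1 / 4 * (deriv (h 1) t / h 1 t * (2 * x 1)) +
        deriv (φ 1) (x 1 / h 1 t) * (1 / h 1 t)) (x 1) := by
    exact ((((((hasDerivAt_pow 2 (x 1)).const_mul _).const_add _).add_const _).const_mul
      (1/4)).add_const _).add (((pin 1).const_add _).add_const _) |>.congr_deriv (by push_cast; ring)
  have Hx2 : HasDerivAt (fun r =>
      1 / 4 *
            (deriv (h 0) t / h 0 t * x 0 ^ 2 + deriv (h 1) t / h 1 t * x 1 ^ 2 +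
              deriv (h 2) t / h 2 t * r ^ 2) +
          φ₀ t +
        (φ 0 (x 0 / h 0 t) + φ 1 (x 1 / h 1 t) + φ 2 (r / h 2 t)))
      (1 / 4 * (deriv (h 2) t / h 2 t * (2 * x 2)) +
        deriv (φ 2) (x 2 / h 2 t) * (1 / h 2 t)) (x 2) := by
    exact (((((hasDerivAt_pow 2 (x 2)).const_mul _).const_add _).const_mul
      (1/4)).add_const _).add ((pin 2).const_add _) |>.congr_deriv (by push_cast; ring)
  rw [Ht.deriv, Hx0.deriv, Hx1.deriv, Hx2.deriv, hφ₀ t]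
  have hF : ∀ (a : Fin 3) (ω : ℝ), F a ω = lam a - deriv (φ a) ω ^ 2 :=
    fun a ω => by linarith [hφ a ω]
  rw [hF 0, hF 1, hF 2]
  simp only [Fin.sum_univ_three]
  set P0 := deriv (φ 0) (x 0 / h 0 t) with hP0
  set P1 := deriv (φ 1) (x 1 / h 1 t) with hP1
  set P2 := deriv (φ 2) (x 2 / h 2 t) with hP2
  set H0 := h 0 t with hH0
  set H1 := h 1 t with hH1
  set H2 := h 2 t with hH2
  have n0 : H0 ≠ 0 := hhne 0 t
  have n1 : H1 ≠ 0 := hhne 1 t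
  have n2 : H2 ≠ 0 := hhne 2 t
  field_simp
  ring
end
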